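/- Let r be a natural number. The number of phase-equivalence classes of elements of H(r+1) is at most (n²−n) times the number of phase-equivalence classes of elements of H(r), where H(r) is the set of matrices implementable by a circuit with exactly r CS-type gates. -/

import Mathlib

open Matrix

noncomputable section

/-- ω = exp(2πi/m). -/
def omega (m : ℕ) : ℂ := Complex.exp (2 * Real.pi * Complex.I / m)

/-- X_i : the permutation matrix of the map x ↦ Function.update x i (x i + 1). -/
def Xn (n : ℕ) (i : Fin n) : Matrix (Fin n → ZMod 2) (Fin n → ZMod 2) ℂ :=
  Matrix.of fun x y => if x = Function.update y i (y i + 1) then 1 else 0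

/-- T_i : the diagonal matrix whose (x,x) entry is ω^((x i).val). -/
def Tn (m n : ℕ) (i : Fin n) : Matrix (Fin n → ZMod 2) (Fin n → ZMod 2) ℂ :=
  Matrix.diagonal fun x => omega m ^ (x i).val

/-- CS_{i,j} : the diagonal matrix whose (x,x) entry is ω^(2·(x i).val·(x j).val). -/
def CSn (m n : ℕ) (i j : Fin n) : Matrix (Fin n → ZMod 2) (Fin n → ZMod 2) ℂ :=
  Matrix.diagonal fun x => omega m ^ (2 * (x i).val * (x j).val)

/-- CS_{i,j}⁻¹ : the diagonal matrix whose (x,x) entry is ω^(-2·(x i).val·(x j).val). -/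
def CSninv (m n : ℕ) (i j : Fin n) : Matrix (Fin n → ZMod 2) (Fin n → ZMod 2) ℂ :=
  Matrix.diagonal fun x => (omega m)⁻¹ ^ (2 * (x i).val * (x j).val)

/-- A gate of a CS-type circuit: some X_i, some power of some T_i, some CS_{i,j},
or some CS_{i,j}⁻¹ (with i ≠ j). -/
inductive GateCS (n : ℕ) where
  | X (i : Fin n)
  | Tpow (i : Fin n) (l : ℕ)
  | CS (i j : Fin n) (h : i ≠ j)
  | CSinv (i j : Fin n) (h : i ≠ j)

/-- The matrix of a gate. -/
def GateCS.toMatrix (m : ℕ) {n : ℕ} : GateCS n → Matrix (Fin n → ZMod 2) (Fin n → ZMod 2) ℂ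
  | .X i => Xn n i
  | .Tpow i l => Tn m n i ^ l
  | .CS i j _ => CSn m n i j
  | .CSinv i j _ => CSninv m n i j

/-- Whether a gate is a CS or CS⁻¹ gate. -/
def GateCS.isCS {n : ℕ} : GateCS n → Bool
  | .CS _ _ _ => true
  | .CSinv _ _ _ => true
  | _ => false

/-- H(r) : the set of matrices implementable by a circuit with exactly r CS-type gates. -/
def Hset (m n r : ℕ) : Set (Matrix (Fin n → ZMod 2) (Fin n → ZMod 2) ℂ) :=
  {U | ∃ L : List (GateCS n), (L.map (GateCS.toMatrix m)).prod = U ∧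
    L.countP (fun g => g.isCS) = r}

/-- Two matrices are phase-equivalent if they differ by a nonzero scalar. -/
def PhaseEq {α : Type*} (U V : Matrix α α ℂ) : Prop := ∃ c : ℂ, c ≠ 0 ∧ U = c • V

/-! Moving a CS-type gate past the X and T gates in front of it keeps it a CS-type gate and
leaves X and T gates behind: T gates commute with it, X_k commutes with CS_{ij} for k ∉ {i, j},
and X_i CS_{ij}^{±1} = CS_{ij}^{∓1} T_j^{±2} X_i, where T_j⁻² = T_j^{2(m-1)} as ω^m = 1. Hence
every element of H(r+1) is a CS-type gate times an element of H(r). There are at most n² − n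
distinct CS-type gate matrices, since CS_{ij} = CS_{ji}, and each is invertible, so left
multiplication by it is injective on phase classes; injectivity is what makes the bound hold
also when there are infinitely many classes, where `Nat.card` is 0. -/

lemma card_le_card_mul_card_of_injective {α β γ : Type*} [Finite α] (f : α → β → γ)
    (hf : ∀ c, ∃ a b, f a b = c) (hinj : ∀ a, Function.Injective (f a)) :
    Nat.card γ ≤ Nat.card α * Nat.card β := by
  rcases finite_or_infinite β with hβ | hβ
  · calc Nat.card γ ≤ Nat.card (α × β) :=
          Nat.card_le_card_of_surjective (Function.uncurry f) fun c => by
            obtain ⟨a, b, h⟩ := hf c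
            exact ⟨(a, b), h⟩
      _ = Nat.card α * Nat.card β := Nat.card_prod α β
  · rcases isEmpty_or_nonempty α with hα | ⟨⟨a⟩⟩
    · have : IsEmpty γ := ⟨fun c => by obtain ⟨a, -⟩ := hf c; exact isEmptyElim a⟩
      simp
    · have : Infinite γ := Infinite.of_injective _ (hinj a)
      simp

lemma PhaseEq.equivalence {α : Type*} : Equivalence (@PhaseEq α) where
  refl U := ⟨1, one_ne_zero, (one_smul ℂ U).symm⟩
  symm := fun ⟨c, hc, h⟩ =>
    ⟨c⁻¹, inv_ne_zero hc, by rw [h, smul_smul, inv_mul_cancel₀ hc, one_smul]⟩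
  trans := fun ⟨c, hc, h⟩ ⟨d, hd, h'⟩ => ⟨c * d, mul_ne_zero hc hd, by rw [h, h', smul_smul]⟩

section PhaseEqMul

variable {α : Type*} [Fintype α] {U V : Matrix α α ℂ}

lemma PhaseEq.mul_left (A : Matrix α α ℂ) (h : PhaseEq U V) : PhaseEq (A * U) (A * V) := by
  obtain ⟨c, hc, rfl⟩ := h
  exact ⟨c, hc, Matrix.mul_smul _ _ _⟩

lemma PhaseEq.of_mul_left [DecidableEq α] {A B : Matrix α α ℂ} (hBA : B * A = 1)
    (h : PhaseEq (A * U) (A * V)) : PhaseEq U V := by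
  simpa only [← Matrix.mul_assoc, hBA, Matrix.one_mul] using h.mul_left B

end PhaseEqMul

lemma omega_ne_zero (m : ℕ) : omega m ≠ 0 := Complex.exp_ne_zero _

lemma inv_omega (m : ℕ) : (omega m)⁻¹ = omega m ^ (m - 1) := by
  rcases m with _ | m
  · simp [omega]
  · refine inv_eq_of_mul_eq_one_right ?_
    rw [← pow_succ', Nat.add_sub_cancel]
    exact (Complex.isPrimitiveRoot_exp _ m.succ_ne_zero).pow_eq_one

lemma pow_two_mul_val_add_one_mul {M : Type*} [CommMonoid M] {z w : M} (hzw : z * w = 1)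
    (a b : ZMod 2) :
    z ^ (2 * (a + 1).val * b.val) = w ^ (2 * a.val * b.val) * (z ^ 2) ^ b.val := by
  have h01 : ∀ c : ZMod 2, c = 0 ∨ c = 1 := by decide
  rcases h01 a with rfl | rfl <;> rcases h01 b with rfl | rfl <;>
    simp [show (1 + 1 : ZMod 2) = 0 from rfl, ZMod.val_one, ← mul_pow, mul_comm w, hzw]

section Gates

variable {m n : ℕ}

/-- `CSn m n i j` and `CSninv m n i j` are definitionally `csDiag (omega m) i j` and
`csDiag (omega m)⁻¹ i j`. -/
def csDiag (z : ℂ) (i j : Fin n) : Matrix (Fin n → ZMod 2) (Fin n → ZMod 2) ℂ :=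
  diagonal fun x => z ^ (2 * (x i).val * (x j).val)

lemma csDiag_comm (z : ℂ) (i j : Fin n) : csDiag z i j = csDiag z j i := by
  simp only [csDiag]
  congr 1
  funext x
  rw [mul_assoc, mul_assoc, mul_comm (x i).val]

lemma CSn_comm (i j : Fin n) : CSn m n i j = CSn m n j i := csDiag_comm _ i j

lemma CSninv_comm (i j : Fin n) : CSninv m n i j = CSninv m n j i := csDiag_comm _ i j

lemma Xn_mul_diagonal (k : Fin n) (f : (Fin n → ZMod 2) → ℂ) :
    Xn n k * diagonal f = diagonal (fun x => f (Function.update x k (x k + 1))) * Xn n k := by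
  ext x y
  rw [mul_diagonal, diagonal_mul]
  by_cases h : x = Function.update y k (y k + 1)
  · have hy : Function.update x k (x k + 1) = y := by
      simp [h, add_assoc, show (1 + 1 : ZMod 2) = 0 from rfl]
    simp [Xn, ← h, hy]
  · simp [Xn, h]

lemma Xn_mul_csDiag_of_ne {k i j : Fin n} (z : ℂ) (hki : k ≠ i) (hkj : k ≠ j) :
    Xn n k * csDiag z i j = csDiag z i j * Xn n k := by
  simp only [csDiag, Xn_mul_diagonal, Function.update_of_ne hki.symm,
    Function.update_of_ne hkj.symm]

lemma Xn_mul_csDiag_self {i j : Fin n} {z w : ℂ} {e : ℕ} (hzw : z * w = 1)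
    (hz : z ^ 2 = omega m ^ e) (hij : i ≠ j) :
    Xn n i * csDiag z i j = csDiag w i j * (Tn m n j ^ e * Xn n i) := by
  rw [csDiag, Xn_mul_diagonal, csDiag, Tn, diagonal_pow, ← Matrix.mul_assoc,
    diagonal_mul_diagonal]
  congr 2
  funext x
  simp only [Function.update_self, Function.update_of_ne hij.symm, Pi.pow_apply]
  rw [pow_two_mul_val_add_one_mul hzw, hz, ← pow_mul, ← pow_mul, mul_comm e]

lemma Xn_mul_csDiag (k : Fin n) {i j : Fin n} {z w : ℂ} {e : ℕ} (hzw : z * w = 1)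
    (hz : z ^ 2 = omega m ^ e) (hij : i ≠ j) :
    Xn n k * csDiag z i j = csDiag z i j * Xn n k ∨
      ∃ j', k ≠ j' ∧ Xn n k * csDiag z i j = csDiag w k j' * (Tn m n j' ^ e * Xn n k) := by
  rcases eq_or_ne k i with rfl | hki
  · exact Or.inr ⟨j, hij, Xn_mul_csDiag_self hzw hz hij⟩
  rcases eq_or_ne k j with rfl | hkj
  · exact Or.inr ⟨i, hij.symm, by rw [csDiag_comm]; exact Xn_mul_csDiag_self hzw hz hij.symm⟩
  · exact Or.inl (Xn_mul_csDiag_of_ne z hki hkj)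

lemma mul_mem_Hset_add {a b : ℕ} {U V : Matrix (Fin n → ZMod 2) (Fin n → ZMod 2) ℂ}
    (hU : U ∈ Hset m n a) (hV : V ∈ Hset m n b) : U * V ∈ Hset m n (a + b) := by
  obtain ⟨L, rfl, rfl⟩ := hU
  obtain ⟨L', rfl, rfl⟩ := hV
  exact ⟨L ++ L', by simp, List.countP_append⟩

lemma GateCS.toMatrix_mem_Hset (g : GateCS n) :
    g.toMatrix m ∈ Hset m n (if g.isCS then 1 else 0) :=
  ⟨[g], by simp, by cases h : g.isCS <;> simp [h]⟩

lemma GateCS.toMatrix_mem_Hset_zero {g : GateCS n} (hg : g.isCS = false) :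
    g.toMatrix m ∈ Hset m n 0 := by
  simpa [hg] using g.toMatrix_mem_Hset (m := m)

lemma Tn_pow_mul_Xn_mem_Hset_zero (j k : Fin n) (e : ℕ) : Tn m n j ^ e * Xn n k ∈ Hset m n 0 :=
  mul_mem_Hset_add (GateCS.toMatrix_mem_Hset_zero (g := .Tpow j e) rfl)
    (GateCS.toMatrix_mem_Hset_zero (g := .X k) rfl)

lemma GateCS.exists_toMatrix_eq_diagonal {c : GateCS n} (hc : c.isCS) :
    ∃ f, c.toMatrix m = diagonal f := by
  cases c with
  | CS i j _ | CSinv i j _ => exact ⟨_, rfl⟩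
  | X _ | Tpow _ _ => simp [GateCS.isCS] at hc

lemma GateCS.exists_toMatrix_mul_eq {g c : GateCS n} (hg : g.isCS = false) (hc : c.isCS) :
    ∃ c' : GateCS n, c'.isCS ∧
      ∃ V ∈ Hset m n 0, g.toMatrix m * c.toMatrix m = c'.toMatrix m * V := by
  have hω := omega_ne_zero m
  cases g with
  | X k =>
    cases c with
    | CS i j hij =>
      rcases Xn_mul_csDiag k (mul_inv_cancel₀ hω) rfl hij with h | ⟨j', hkj, h⟩
      · exact ⟨.CS i j hij, rfl, _, GateCS.toMatrix_mem_Hset_zero (g := .X k) rfl, h⟩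
      · exact ⟨.CSinv k j' hkj, rfl, _, Tn_pow_mul_Xn_mem_Hset_zero j' k 2, h⟩
    | CSinv i j hij =>
      have hz : (omega m)⁻¹ ^ 2 = omega m ^ ((m - 1) * 2) := by rw [inv_omega, pow_mul]
      rcases Xn_mul_csDiag k (inv_mul_cancel₀ hω) hz hij with h | ⟨j', hkj, h⟩
      · exact ⟨.CSinv i j hij, rfl, _, GateCS.toMatrix_mem_Hset_zero (g := .X k) rfl, h⟩
      · exact ⟨.CS k j' hkj, rfl, _, Tn_pow_mul_Xn_mem_Hset_zero j' k _, h⟩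
    | X _ | Tpow _ _ => simp [GateCS.isCS] at hc
  | Tpow k l =>
    obtain ⟨f, hf⟩ := c.exists_toMatrix_eq_diagonal hc (m := m)
    refine ⟨c, hc, _, GateCS.toMatrix_mem_Hset_zero (g := .Tpow k l) rfl, ?_⟩
    rw [hf, GateCS.toMatrix, Tn, diagonal_pow]
    exact (commute_diagonal _ _).eq
  | CS _ _ _ | CSinv _ _ _ => simp [GateCS.isCS] at hg

lemma exists_isCS_mul_of_mem_Hset_succ {r : ℕ} {U : Matrix (Fin n → ZMod 2) (Fin n → ZMod 2) ℂ}
    (hU : U ∈ Hset m n (r + 1)) :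
    ∃ c : GateCS n, c.isCS ∧ ∃ W ∈ Hset m n r, U = c.toMatrix m * W := by
  obtain ⟨L, rfl, hL⟩ := hU
  induction L generalizing r with
  | nil => simp at hL
  | cons g L ih =>
    cases hg : g.isCS
    · rw [List.countP_cons_of_neg (by simpa using hg)] at hL
      obtain ⟨c, hc, W, hW, hLW⟩ := ih hL
      obtain ⟨c', hc', V, hV, hgc⟩ := GateCS.exists_toMatrix_mul_eq (m := m) hg hc
      refine ⟨c', hc', V * W, by simpa using mul_mem_Hset_add hV hW, ?_⟩
      rw [List.map_cons, List.prod_cons, hLW, ← Matrix.mul_assoc, hgc, Matrix.mul_assoc]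
    · rw [List.countP_cons_of_pos hg, Nat.add_right_cancel_iff] at hL
      exact ⟨g, hg, _, ⟨L, rfl, hL⟩, by rw [List.map_cons, List.prod_cons]⟩

variable (m n) in
def csGateMatrices : Set (Matrix (Fin n → ZMod 2) (Fin n → ZMod 2) ℂ) :=
  GateCS.toMatrix m '' {c | c.isCS}

lemma mul_mem_Hset_succ {r : ℕ} {M W : Matrix (Fin n → ZMod 2) (Fin n → ZMod 2) ℂ}
    (hM : M ∈ csGateMatrices m n) (hW : W ∈ Hset m n r) : M * W ∈ Hset m n (r + 1) := by
  obtain ⟨c, hc, rfl⟩ := hM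
  simpa [show c.isCS from hc, add_comm] using mul_mem_Hset_add (c.toMatrix_mem_Hset (m := m)) hW

lemma exists_mul_eq_one_of_mem_csGateMatrices {M : Matrix (Fin n → ZMod 2) (Fin n → ZMod 2) ℂ}
    (hM : M ∈ csGateMatrices m n) : ∃ B, B * M = 1 := by
  obtain ⟨c, hc, rfl⟩ := hM
  have hω := omega_ne_zero m
  cases c with
  | CS i j _ => exact ⟨CSninv m n i j, by simp [GateCS.toMatrix, CSn, CSninv, hω]⟩
  | CSinv i j _ => exact ⟨CSn m n i j, by simp [GateCS.toMatrix, CSn, CSninv, hω]⟩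
  | X _ | Tpow _ _ => simp [GateCS.isCS] at hc

/-- Since `CS_{ij} = CS_{ji}`, every CS-type gate matrix is `csOfPair` of some pair `i ≠ j`. -/
def csOfPair (p : Fin n × Fin n) : Matrix (Fin n → ZMod 2) (Fin n → ZMod 2) ℂ :=
  if p.1 < p.2 then CSn m n p.1 p.2 else CSninv m n p.1 p.2

lemma csGateMatrices_subset_image_offDiag :
    csGateMatrices m n ⊆ csOfPair (m := m) '' (Finset.univ.offDiag : Finset (Fin n × Fin n)) := by
  rintro _ ⟨c, hc, rfl⟩
  cases c with
  | CS i j hij =>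
    rcases hij.lt_or_gt with h | h
    · exact ⟨(i, j), by simp [hij], by simp [csOfPair, h, GateCS.toMatrix]⟩
    · exact ⟨(j, i), by simp [hij.symm], by
        simp [csOfPair, h, GateCS.toMatrix, CSn_comm i j]⟩
  | CSinv i j hij =>
    rcases hij.lt_or_gt with h | h
    · exact ⟨(j, i), by simp [hij.symm], by
        simp [csOfPair, h.not_gt, GateCS.toMatrix, CSninv_comm i j]⟩
    · exact ⟨(i, j), by simp [hij], by simp [csOfPair, h.not_gt, GateCS.toMatrix]⟩
  | X _ | Tpow _ _ => simp [GateCS.isCS] at hc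

lemma finite_csGateMatrices : (csGateMatrices m n).Finite :=
  ((Finset.finite_toSet _).image _).subset csGateMatrices_subset_image_offDiag

lemma ncard_csGateMatrices_le : (csGateMatrices m n).ncard ≤ n ^ 2 - n :=
  calc (csGateMatrices m n).ncard
      ≤ (csOfPair (m := m) '' (Finset.univ.offDiag : Finset (Fin n × Fin n))).ncard :=
        Set.ncard_le_ncard csGateMatrices_subset_image_offDiag ((Finset.finite_toSet _).image _)
    _ ≤ (Finset.univ.offDiag : Finset (Fin n × Fin n)).card :=
        (Set.ncard_image_le (Finset.finite_toSet _)).trans (Set.ncard_coe_finset _).le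
    _ = n ^ 2 - n := by simp [Finset.offDiag_card, sq]

variable (m n) in
abbrev PhaseClasses (r : ℕ) : Type :=
  Quot fun U V : Hset m n r => PhaseEq U.1 V.1

def csMul {r : ℕ} (M : csGateMatrices m n) : PhaseClasses m n r → PhaseClasses m n (r + 1) :=
  Quot.map (fun W => ⟨M.1 * W.1, mul_mem_Hset_succ M.2 W.2⟩) fun _ _ => PhaseEq.mul_left M.1

lemma csMul_injective {r : ℕ} (M : csGateMatrices m n) :
    Function.Injective (csMul (r := r) M) := by
  obtain ⟨B, hB⟩ := exists_mul_eq_one_of_mem_csGateMatrices M.2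
  have hequiv := PhaseEq.equivalence.comap (Subtype.val : Hset m n (r + 1) → _)
  rintro ⟨U⟩ ⟨V⟩ h
  exact Quot.sound (PhaseEq.of_mul_left hB ((hequiv.eqvGen_iff).1 (Quot.eqvGen_exact h)))

lemma exists_csMul_eq {r : ℕ} (q : PhaseClasses m n (r + 1)) : ∃ M q', csMul M q' = q := by
  obtain ⟨⟨U, hU⟩⟩ := q
  obtain ⟨c, hc, W, hW, rfl⟩ := exists_isCS_mul_of_mem_Hset_succ hU
  exact ⟨⟨_, c, hc, rfl⟩, Quot.mk _ ⟨W, hW⟩, rfl⟩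

end Gates

theorem H_succ_card_bound_general (m n : ℕ) (r : ℕ) :
    Nat.card (Quot (fun (U V : Hset m n (r + 1)) => PhaseEq U.1 V.1)) ≤
      (n ^ 2 - n) * Nat.card (Quot (fun (U V : Hset m n r) => PhaseEq U.1 V.1)) := by
  have : Finite (csGateMatrices m n) := finite_csGateMatrices.to_subtype
  calc Nat.card (PhaseClasses m n (r + 1))
      ≤ Nat.card (csGateMatrices m n) * Nat.card (PhaseClasses m n r) :=
        card_le_card_mul_card_of_injective csMul exists_csMul_eq csMul_injective
    _ ≤ (n ^ 2 - n) * Nat.card (PhaseClasses m n r) :=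
        Nat.mul_le_mul_right _ ((Nat.card_coe_set_eq _).trans_le ncard_csGateMatrices_le)

theorem H_succ_card_bound (m n : ℕ) (hm : 0 < m) (hn : 0 < n) (r : ℕ) :
    Nat.card (Quot (fun (U V : Hset m n (r + 1)) => PhaseEq U.1 V.1)) ≤
      (n ^ 2 - n) * Nat.card (Quot (fun (U V : Hset m n r) => PhaseEq U.1 V.1)) :=
  H_succ_card_bound_general m n r

end
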